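/- arXiv:2302.03672 — 7 statements merged into one kernel-verified Lean document; each statement's English description precedes it below -/
import Mathlib

section
/- For every ABB instance and every satisfaction function μ, there exists an outcome W (i.e., a set W ⊆ P with c(W) ≤ b) that satisfies EJR with respect to μ. -/
/-! Greedy construction. Among the cohesive pairs `(N, T)` with `N` inside the voters `R` still to
be served, take one with `μ T` maximal, fund `T` and recurse on `R \ N`. A cohesive group meeting `N`
is then served by `T`, by maximality and monotonicity of `μ`; one disjoint from `N` is served by the
recursion. Each round spends at most `|N| b / n`, so the whole outcome costs at most `|R| b / n`. -/

open Finset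

namespace ABB

variable {V P : Type} [Fintype V] [DecidableEq V] [Fintype P] [DecidableEq P]

/-- Total cost of a set of projects. -/
def costOf (c : P → ℝ) (S : Finset P) : ℝ := ∑ p ∈ S, c p

/-- `μ` is an (approval-based) satisfaction function: monotone w.r.t. inclusion,
nonnegative, and zero exactly on the empty set. -/
def IsSatFun (μ : Finset P → ℝ) : Prop :=
  (∀ S T : Finset P, S ⊆ T → μ S ≤ μ T) ∧
  (∀ S : Finset P, μ S = 0 ↔ S = ∅) ∧
  (∀ S : Finset P, 0 ≤ μ S)

/-- `μ` is strictly increasing. -/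
def StrictlyIncreasing (μ : Finset P → ℝ) : Prop :=
  ∀ S T : Finset P, S ⊂ T → μ S < μ T

/-- `μ` is cost-neutral: sets related by a cost-preserving bijection get equal satisfaction. -/
def CostNeutral (c : P → ℝ) (μ : Finset P → ℝ) : Prop :=
  ∀ S T : Finset P,
    (∃ f : {p // p ∈ S} → {p // p ∈ T},
        Function.Bijective f ∧ ∀ p : {p // p ∈ S}, c p.val = c (f p).val) →
    μ S = μ T

/-- `μ` is additive. -/
def Additive (μ : Finset P → ℝ) : Prop :=
  ∀ S : Finset P, μ S = ∑ p ∈ S, μ {p}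

/-- `μ` is strictly cost-responsive. -/
def StrictlyCostResponsive (c : P → ℝ) (μ : Finset P → ℝ) : Prop :=
  ∀ S T : Finset P, costOf c S < costOf c T → μ S < μ T

/-- The instance is a unit-cost instance. -/
def UnitCost (c : P → ℝ) : Prop := ∀ p : P, c p = 1

/-- `μ` has weakly decreasing normalized satisfaction (DNS): it is additive, and for
projects `p, p'` with `c p ≤ c p'` we have `μ {p} ≤ μ {p'}` and
`μ {p} / c p ≥ μ {p'} / c p'`. -/
def DNS (c : P → ℝ) (μ : Finset P → ℝ) : Prop :=
  Additive μ ∧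
  ∀ p p' : P, c p ≤ c p' → μ {p} ≤ μ {p'} ∧ μ {p'} / c p' ≤ μ {p} / c p

/-- A (nonempty) group `N'` of voters is `T`-cohesive. -/
def Cohesive (A : V → Finset P) (c : P → ℝ) (b : ℝ)
    (N' : Finset V) (T : Finset P) : Prop :=
  N'.Nonempty ∧ (∀ i ∈ N', T ⊆ A i) ∧
    costOf c T ≤ ((N'.card : ℝ) / (Fintype.card V : ℝ)) * b

/-- Extended justified representation w.r.t. `μ`. -/
def EJR (A : V → Finset P) (c : P → ℝ) (b : ℝ) (μ : Finset P → ℝ) (W : Finset P) : Prop :=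
  ∀ (N' : Finset V) (T : Finset P), Cohesive A c b N' T →
    ∃ i ∈ N', μ T ≤ μ (A i ∩ W)

/-- EJR up to one project w.r.t. `μ`. -/
def EJR1 (A : V → Finset P) (c : P → ℝ) (b : ℝ) (μ : Finset P → ℝ) (W : Finset P) : Prop :=
  ∀ (N' : Finset V) (T : Finset P), Cohesive A c b N' T →
    T ⊆ W ∨ ∃ i ∈ N', ∃ p ∉ W, μ T < μ (A i ∩ insert p W)

/-- EJR up to any project w.r.t. `μ`. -/
def EJRx (A : V → Finset P) (c : P → ℝ) (b : ℝ) (μ : Finset P → ℝ) (W : Finset P) : Prop :=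
  ∀ (N' : Finset V) (T : Finset P), Cohesive A c b N' T →
    ∃ i ∈ N', ∀ p ∈ T \ W, μ T < μ (A i ∩ insert p W)

/-- `μ`-EJR-1⁺: like EJR-1, but the additional project must come from `T`. -/
def EJR1plus (A : V → Finset P) (c : P → ℝ) (b : ℝ) (μ : Finset P → ℝ) (W : Finset P) : Prop :=
  ∀ (N' : Finset V) (T : Finset P), Cohesive A c b N' T →
    T ⊆ W ∨ ∃ i ∈ N', ∃ p ∈ T \ W, μ T < μ (A i ∩ insert p W)

/-- Proportional justified representation w.r.t. `μ`. -/
def PJR (A : V → Finset P) (c : P → ℝ) (b : ℝ) (μ : Finset P → ℝ) (W : Finset P) : Prop :=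
  ∀ (N' : Finset V) (T : Finset P), Cohesive A c b N' T →
    μ T ≤ μ (W ∩ N'.biUnion A)

/-- PJR up to any project w.r.t. `μ`. -/
def PJRx (A : V → Finset P) (c : P → ℝ) (b : ℝ) (μ : Finset P → ℝ) (W : Finset P) : Prop :=
  ∀ (N' : Finset V) (T : Finset P), Cohesive A c b N' T →
    ∀ p ∈ T \ W, μ T < μ (insert p (W ∩ N'.biUnion A))

/-- `μ`-Local-BPJR. -/
def LocalBPJR (A : V → Finset P) (c : P → ℝ) (b : ℝ) (μ : Finset P → ℝ) (W : Finset P) : Prop :=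
  ¬ ∃ (N' : Finset V) (T Wstar : Finset P),
      Cohesive A c b N' T ∧
      N'.biUnion A ∩ W ⊂ Wstar ∧
      (∀ i ∈ N', Wstar ⊆ A i) ∧
      costOf c Wstar ≤ costOf c T ∧
      (∀ W' : Finset P, (∀ i ∈ N', W' ⊆ A i) → costOf c W' ≤ costOf c T → μ W' ≤ μ Wstar)

/-- The set of approvers of a project. -/
def approvers (A : V → Finset P) (p : P) : Finset V :=
  Finset.univ.filter (fun i => p ∈ A i)

/-- `p` is `ρ`-affordable given per-voter remaining budgets `bud`. -/
def Affordable (A : V → Finset P) (c : P → ℝ) (μ : Finset P → ℝ)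
    (bud : V → ℝ) (p : P) (ρ : ℝ) : Prop :=
  ∑ i ∈ approvers A p, min (bud i) (ρ * μ {p}) = c p

/-- The states (selected set, remaining budgets) reachable by the Method of Equal Shares,
starting from initial per-voter budget `b0`. -/
inductive MESReach (A : V → Finset P) (c : P → ℝ) (μ : Finset P → ℝ) (b0 : ℝ) :
    Finset P → (V → ℝ) → Prop
  | init : MESReach A c μ b0 ∅ (fun _ => b0)
  | step {W : Finset P} {bud : V → ℝ} {p : P} {ρ : ℝ} :
      MESReach A c μ b0 W bud →
      p ∉ W → 0 ≤ ρ →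
      Affordable A c μ bud p ρ →
      (∀ p' ∉ W, ∀ ρ' : ℝ, 0 ≤ ρ' → Affordable A c μ bud p' ρ' → ρ ≤ ρ') →
      MESReach A c μ b0 (insert p W)
        (fun i => if p ∈ A i then bud i - min (bud i) (ρ * μ {p}) else bud i)

/-- `W` is an output of MES[μ]: it is reachable and no further project is affordable. -/
def MESOutput (A : V → Finset P) (c : P → ℝ) (b : ℝ) (μ : Finset P → ℝ) (W : Finset P) : Prop :=
  ∃ bud : V → ℝ,
    MESReach A c μ (b / (Fintype.card V : ℝ)) W bud ∧
    ∀ p ∉ W, ∀ ρ : ℝ, 0 ≤ ρ → ¬ Affordable A c μ bud p ρ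

/-- `(B, d)` is a price system for `W` (conditions C1–C5). -/
def PriceSystem (A : V → Finset P) (c : P → ℝ) (W : Finset P)
    (B : ℝ) (d : V → P → ℝ) : Prop :=
  0 < B ∧
  (∀ (i : V) (p : P), 0 ≤ d i p ∧ d i p ≤ B / (Fintype.card V : ℝ)) ∧
  (∀ (i : V) (p : P), 0 < d i p → p ∈ A i) ∧
  (∀ (i : V) (p : P), 0 < d i p → p ∈ W) ∧
  (∀ i : V, ∑ p : P, d i p ≤ B / (Fintype.card V : ℝ)) ∧
  (∀ p ∈ W, ∑ i : V, d i p = c p) ∧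
  (∀ p ∉ W, ∑ i ∈ approvers A p, (B / (Fintype.card V : ℝ) - ∑ p' : P, d i p') ≤ c p)

/-- Condition C6 for a payment function `d`. -/
def C6 (A : V → Finset P) (c : P → ℝ) (W : Finset P) (d : V → P → ℝ) : Prop :=
  ∀ p ∉ W, ∀ p' ∈ W, ∑ i ∈ approvers A p, d i p' ≤ c p

/-- Unselected projects with at least one approver. -/
def phragCandidates (A : V → Finset P) (W : Finset P) : Finset P :=
  Finset.univ.filter (fun p => p ∉ W ∧ (approvers A p).Nonempty)

/-- Sequential Phragmén's value `t(p)` given loads `l`. -/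
noncomputable def phragLoad (A : V → Finset P) (c : P → ℝ) (l : V → ℝ) (p : P) : ℝ :=
  (c p + ∑ i ∈ approvers A p, l i) / ((approvers A p).card : ℝ)

/-- The states (selected set, loads) reachable by sequential Phragmén. -/
inductive PhragReach (A : V → Finset P) (c : P → ℝ) (b : ℝ) :
    Finset P → (V → ℝ) → Prop
  | init : PhragReach A c b ∅ (fun _ => 0)
  | step {W : Finset P} {l : V → ℝ} {p : P} :
      PhragReach A c b W l →
      p ∈ phragCandidates A W →
      (∀ p' ∈ phragCandidates A W, phragLoad A c l p ≤ phragLoad A c l p') →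
      (∀ p' ∈ phragCandidates A W,
        (∀ p'' ∈ phragCandidates A W, phragLoad A c l p' ≤ phragLoad A c l p'') →
        costOf c W + c p' ≤ b) →
      PhragReach A c b (insert p W)
        (fun i => if p ∈ A i then phragLoad A c l p else l i)

/-- `W` is an output of sequential Phragmén: it is reachable and the rule terminates at `W`
(either no candidate is left, or some minimizer of `t` would exceed the budget). -/
def PhragOutput (A : V → Finset P) (c : P → ℝ) (b : ℝ) (W : Finset P) : Prop :=
  ∃ l : V → ℝ, PhragReach A c b W l ∧
    (phragCandidates A W = ∅ ∨
      ∃ p ∈ phragCandidates A W,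
        (∀ p' ∈ phragCandidates A W, phragLoad A c l p ≤ phragLoad A c l p') ∧
        b < costOf c W + c p)

end ABB

namespace ABB

variable {V P : Type}

theorem IsSatFun.monotone {μ : Finset P → ℝ} (hμ : IsSatFun μ) : Monotone μ := hμ.1

theorem costOf_union_le [DecidableEq P] {c : P → ℝ} (hc : ∀ p, 0 ≤ c p) (S T : Finset P) :
    costOf c (S ∪ T) ≤ costOf c S + costOf c T := by
  have hinter : 0 ≤ costOf c (S ∩ T) := sum_nonneg fun p _ => hc p
  have := sum_union_inter (s₁ := S) (s₂ := T) (f := c)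
  unfold costOf at *
  linarith

def EJROn [Fintype V] [DecidableEq P] (A : V → Finset P) (c : P → ℝ) (b : ℝ)
    (μ : Finset P → ℝ) (R : Finset V) (W : Finset P) : Prop :=
  ∀ N' ⊆ R, ∀ T : Finset P, Cohesive A c b N' T → ∃ i ∈ N', μ T ≤ μ (A i ∩ W)

section
variable [Fintype V] [DecidableEq P] {A : V → Finset P} {c : P → ℝ} {b : ℝ} {μ : Finset P → ℝ}

theorem ejr_iff_ejrOn_univ {W : Finset P} : EJR A c b μ W ↔ EJROn A c b μ univ W :=
  ⟨fun h N' _ T hT => h N' T hT, fun h N' T hT => h N' (subset_univ N') T hT⟩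

theorem EJROn.union_of_forall_le [DecidableEq V] (hμ : Monotone μ) {R N : Finset V}
    {T W : Finset P} (hNT : Cohesive A c b N T)
    (hmax : ∀ N' ⊆ R, ∀ T', Cohesive A c b N' T' → μ T' ≤ μ T)
    (hW : EJROn A c b μ (R \ N) W) : EJROn A c b μ R (T ∪ W) := by
  intro N' hN'R T' hT'
  by_cases hdisj : Disjoint N' N
  · obtain ⟨i, hi, hle⟩ := hW N' (subset_sdiff.2 ⟨hN'R, hdisj⟩) T' hT'
    exact ⟨i, hi, hle.trans (hμ (inter_subset_inter_left subset_union_right))⟩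
  · obtain ⟨i, hiN', hiN⟩ := not_disjoint_iff.1 hdisj
    exact ⟨i, hiN', (hmax N' hN'R T' hT').trans
      (hμ (subset_inter (hNT.2.1 i hiN) subset_union_left))⟩

theorem exists_costOf_le_ejrOn [DecidableEq V] [Fintype P] (A : V → Finset P)
    (hc : ∀ p, 0 ≤ c p) (hb : 0 ≤ b) (hμ : Monotone μ) (R : Finset V) :
    ∃ W : Finset P, costOf c W ≤ (#R / Fintype.card V : ℝ) * b ∧ EJROn A c b μ R W := by
  classical
  induction R using strongInduction with
  | H R ih =>
  let pairs := (univ : Finset (Finset V × Finset P)).filter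
    fun q => q.1 ⊆ R ∧ Cohesive A c b q.1 q.2
  rcases pairs.eq_empty_or_nonempty with hnone | hsome
  · refine ⟨∅, by simp only [costOf, sum_empty]; positivity, fun N' hN' T hT => ?_⟩
    exact absurd (mem_filter.2 ⟨mem_univ (N', T), hN', hT⟩) (hnone ▸ notMem_empty _)
  obtain ⟨⟨N, T⟩, hNT, hmax⟩ := exists_max_image pairs (fun q => μ q.2) hsome
  obtain ⟨hNR, hcoh⟩ := (mem_filter.1 hNT).2
  obtain ⟨W, hWcost, hW⟩ := ih (R \ N) (sdiff_ssubset hNR hcoh.1)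
  refine ⟨T ∪ W, ?_, hW.union_of_forall_le hμ hcoh
    fun N' hN' T' hT' => hmax (N', T') (mem_filter.2 ⟨mem_univ _, hN', hT'⟩)⟩
  have hcard : (#(R \ N) : ℝ) + #N = #R := mod_cast card_sdiff_add_card_eq_card hNR
  calc costOf c (T ∪ W) ≤ costOf c T + costOf c W := costOf_union_le hc T W
    _ ≤ (#N / Fintype.card V : ℝ) * b + (#(R \ N) / Fintype.card V : ℝ) * b :=
      add_le_add hcoh.2.2 hWcost
    _ = (#R / Fintype.card V : ℝ) * b := by rw [← hcard]; ring

end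

end ABB

theorem statement2_general {V P : Type} [Fintype V] [DecidableEq V] [Fintype P] [DecidableEq P]
    (A : V → Finset P) (c : P → ℝ) (b : ℝ)
    (hc : ∀ p : P, 0 < c p) (hb : 0 < b)
    (μ : Finset P → ℝ) (hμ : ABB.IsSatFun μ) :
    ∃ W : Finset P, ABB.costOf c W ≤ b ∧ ABB.EJR A c b μ W := by
  obtain ⟨W, hcost, hW⟩ :=
    ABB.exists_costOf_le_ejrOn A (fun p => (hc p).le) hb.le hμ.monotone univ
  refine ⟨W, hcost.trans ?_, ABB.ejr_iff_ejrOn_univ.2 hW⟩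
  rw [card_univ]
  exact mul_le_of_le_one_left hb.le (div_self_le_one _)

/-- For every ABB instance and satisfaction function `μ`, there is an
outcome satisfying EJR w.r.t. `μ`. -/
theorem statement2 {V P : Type} [Fintype V] [DecidableEq V] [Fintype P] [DecidableEq P]
    (A : V → Finset P) (c : P → ℝ) (b : ℝ)
    (hn : 0 < Fintype.card V) (hc : ∀ p : P, 0 < c p) (hb : 0 < b)
    (μ : Finset P → ℝ) (hμ : ABB.IsSatFun μ) :
    ∃ W : Finset P, ABB.costOf c W ≤ b ∧ ABB.EJR A c b μ W :=
  statement2_general A c b hc hb μ hμ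
end

section
/- Consider an ABB instance with exactly one voter who approves every project in P, and let μ be a satisfaction function that is strictly cost-responsive. If there exists a set T ⊆ P with c(T) = b, then every outcome W that satisfies EJR with respect to μ has c(W) = b. -/
open Finset

namespace ABB

theorem cohesive_univ {V P : Type} [Fintype V] [Nonempty V]
    {A : V → Finset P} {c : P → ℝ} {b : ℝ} {T : Finset P}
    (hTA : ∀ i, T ⊆ A i) (hTb : costOf c T ≤ b) : Cohesive A c b univ T := by
  refine ⟨univ_nonempty, fun i _ => hTA i, ?_⟩
  have hV : (Fintype.card V : ℝ) ≠ 0 := Nat.cast_ne_zero.mpr Fintype.card_ne_zero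
  rwa [card_univ, div_self hV, one_mul]

theorem EJR.le_of_forall_eq_univ {V P : Type} [Fintype V] [Nonempty V] [Fintype P]
    [DecidableEq P] {A : V → Finset P} {c : P → ℝ} {b : ℝ} {μ : Finset P → ℝ} {W : Finset P}
    (hW : EJR A c b μ W) (hall : ∀ i, A i = univ)
    {T : Finset P} (hTb : costOf c T ≤ b) : μ T ≤ μ W := by
  obtain ⟨i, -, hi⟩ := hW _ T (cohesive_univ (fun i => (hall i).symm ▸ T.subset_univ) hTb)
  rwa [hall i, univ_inter] at hi

theorem StrictlyCostResponsive.costOf_le {P : Type} {c : P → ℝ} {μ : Finset P → ℝ}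
    (hμ : StrictlyCostResponsive c μ) {S T : Finset P} (hST : μ S ≤ μ T) :
    costOf c S ≤ costOf c T :=
  not_lt.mp fun h => (hμ T S h).not_ge hST

end ABB

theorem statement3_general {V P : Type} [Fintype V] [Fintype P] [DecidableEq P]
    (A : V → Finset P) (c : P → ℝ) (b : ℝ)
    (hone : Fintype.card V = 1) (hall : ∀ i : V, A i = Finset.univ)
    (μ : Finset P → ℝ)
    (hscr : ABB.StrictlyCostResponsive c μ)
    (hT : ∃ T : Finset P, ABB.costOf c T = b) :
    ∀ W : Finset P, ABB.costOf c W ≤ b → ABB.EJR A c b μ W → ABB.costOf c W = b := by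
  intro W hWb hEJR
  obtain ⟨T, rfl⟩ := hT
  have : Nonempty V := Fintype.card_pos_iff.mp (hone ▸ Nat.one_pos)
  exact hWb.antisymm (hscr.costOf_le (hEJR.le_of_forall_eq_univ hall le_rfl))

/-- In an ABB instance with exactly one voter who approves all projects,
for a strictly cost-responsive satisfaction function `μ`: if some `T ⊆ P` has cost exactly
`b`, then every outcome satisfying EJR w.r.t. `μ` has cost exactly `b`. -/
theorem statement3 {V P : Type} [Fintype V] [DecidableEq V] [Fintype P] [DecidableEq P]
    (A : V → Finset P) (c : P → ℝ) (b : ℝ)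
    (hc : ∀ p : P, 0 < c p) (hb : 0 < b)
    (hone : Fintype.card V = 1) (hall : ∀ i : V, A i = Finset.univ)
    (μ : Finset P → ℝ) (hμ : ABB.IsSatFun μ)
    (hscr : ABB.StrictlyCostResponsive c μ)
    (hT : ∃ T : Finset P, ABB.costOf c T = b) :
    ∀ W : Finset P, ABB.costOf c W ≤ b → ABB.EJR A c b μ W → ABB.costOf c W = b :=
  statement3_general A c b hone hall μ hscr hT
end

section
/- Consider a unit-cost ABB instance and a satisfaction function μ that is cost-neutral and strictly increasing. Then for every outcome W: W satisfies EJR-1 with respect to μ if and only if W satisfies EJR with respect to μ, and W satisfies EJR-x with respect to μ if and only if W satisfies EJR with respect to μ. -/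
/-!
With unit costs, cost-neutrality makes `μ S` a monotone function of `|S|` alone. If a voter `i`
with `T ⊆ A i` has `μ T ≤ μ (A i ∩ W)`, then adding any `p ∈ T \ W` strictly raises `μ (A i ∩ W)`,
which gives EJR-1 and EJR-x. Conversely, if adding one project to `A i ∩ W` pushes `μ` above
`μ T`, then `|T| < |A i ∩ W| + 1`, so `|T| ≤ |A i ∩ W|` and hence `μ T ≤ μ (A i ∩ W)`.
-/

open Finset

namespace ABB

variable {P : Type}

theorem CostNeutral.eq_of_card_eq {c : P → ℝ} {μ : Finset P → ℝ} (hcn : CostNeutral c μ)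
    (hunit : UnitCost c) {S T : Finset P} (h : S.card = T.card) : μ S = μ T := by
  obtain ⟨e⟩ : Nonempty ({p // p ∈ S} ≃ {p // p ∈ T}) :=
    Fintype.card_eq.mp (by simpa only [Fintype.card_coe] using h)
  exact hcn S T ⟨e, e.bijective, fun p => by rw [hunit, hunit]⟩

theorem CostNeutral.le_of_card_le {c : P → ℝ} {μ : Finset P → ℝ} (hcn : CostNeutral c μ)
    (hunit : UnitCost c) (hmono : ∀ S T : Finset P, S ⊆ T → μ S ≤ μ T) {S T : Finset P}
    (h : S.card ≤ T.card) : μ S ≤ μ T := by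
  obtain ⟨T', hT'T, hT'card⟩ := exists_subset_card_eq h
  rw [hcn.eq_of_card_eq hunit hT'card.symm]
  exact hmono _ _ hT'T

theorem le_of_lt_of_card_le_succ {μ : Finset P → ℝ}
    (hcard : ∀ S T : Finset P, S.card ≤ T.card → μ S ≤ μ T) {T X Y : Finset P}
    (hYX : Y.card ≤ X.card + 1) (hlt : μ T < μ Y) : μ T ≤ μ X := by
  refine hcard _ _ (le_of_not_gt fun hXT => ?_)
  exact (hcard Y T (by omega)).not_gt hlt

variable [DecidableEq P]

theorem card_inter_insert_le (A W : Finset P) (p : P) :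
    (A ∩ insert p W).card ≤ (A ∩ W).card + 1 := by
  rw [insert_inter]
  split_ifs
  · exact card_insert_le _ _
  · exact Nat.le_succ _

theorem StrictlyIncreasing.lt_inter_insert {μ : Finset P → ℝ} (hsi : StrictlyIncreasing μ)
    {A W : Finset P} {p : P} (hpA : p ∈ A) (hpW : p ∉ W) : μ (A ∩ W) < μ (A ∩ insert p W) := by
  rw [inter_insert_of_mem hpA]
  exact hsi _ _ (ssubset_insert fun hp => hpW (mem_inter.mp hp).2)

variable {V : Type} [Fintype V]

theorem Cohesive.exists_le_of_subset {A : V → Finset P} {c : P → ℝ} {b : ℝ}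
    {μ : Finset P → ℝ} (hmono : ∀ S T : Finset P, S ⊆ T → μ S ≤ μ T) {N' : Finset V}
    {T W : Finset P} (hcoh : Cohesive A c b N' T) (hTW : T ⊆ W) :
    ∃ i ∈ N', μ T ≤ μ (A i ∩ W) := by
  obtain ⟨i, hi⟩ := hcoh.1
  exact ⟨i, hi, hmono _ _ (subset_inter (hcoh.2.1 i hi) hTW)⟩

section

variable {A : V → Finset P} {c : P → ℝ} {b : ℝ} {μ : Finset P → ℝ} {W : Finset P}

theorem EJR.ejr1 (hsi : StrictlyIncreasing μ) (h : EJR A c b μ W) : EJR1 A c b μ W := by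
  intro N' T hcoh
  obtain ⟨i, hi, hTi⟩ := h N' T hcoh
  by_cases hTW : T ⊆ W
  · exact Or.inl hTW
  · obtain ⟨p, hpT, hpW⟩ := not_subset.mp hTW
    exact Or.inr ⟨i, hi, p, hpW, hTi.trans_lt (hsi.lt_inter_insert (hcoh.2.1 i hi hpT) hpW)⟩

theorem EJR.ejrx (hsi : StrictlyIncreasing μ) (h : EJR A c b μ W) : EJRx A c b μ W := by
  intro N' T hcoh
  obtain ⟨i, hi, hTi⟩ := h N' T hcoh
  refine ⟨i, hi, fun p hp => ?_⟩
  obtain ⟨hpT, hpW⟩ := mem_sdiff.mp hp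
  exact hTi.trans_lt (hsi.lt_inter_insert (hcoh.2.1 i hi hpT) hpW)

theorem EJR1.ejr (hcard : ∀ S T : Finset P, S.card ≤ T.card → μ S ≤ μ T)
    (h : EJR1 A c b μ W) : EJR A c b μ W := by
  intro N' T hcoh
  rcases h N' T hcoh with hTW | ⟨i, hi, p, -, hlt⟩
  · exact hcoh.exists_le_of_subset (fun S T hST => hcard S T (card_le_card hST)) hTW
  · exact ⟨i, hi, le_of_lt_of_card_le_succ hcard (card_inter_insert_le _ _ p) hlt⟩

theorem EJRx.ejr (hcard : ∀ S T : Finset P, S.card ≤ T.card → μ S ≤ μ T)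
    (h : EJRx A c b μ W) : EJR A c b μ W := by
  intro N' T hcoh
  obtain ⟨i, hi, hlt⟩ := h N' T hcoh
  by_cases hTW : T ⊆ W
  · exact hcoh.exists_le_of_subset (fun S T hST => hcard S T (card_le_card hST)) hTW
  · obtain ⟨p, hpT, hpW⟩ := not_subset.mp hTW
    exact ⟨i, hi, le_of_lt_of_card_le_succ hcard (card_inter_insert_le _ _ p)
      (hlt p (mem_sdiff.mpr ⟨hpT, hpW⟩))⟩

end

end ABB

theorem statement5_general {V P : Type} [Fintype V] [DecidableEq P]
    (A : V → Finset P) (c : P → ℝ) (b : ℝ)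
    (hunit : ABB.UnitCost c)
    (μ : Finset P → ℝ) (hμ : ABB.IsSatFun μ)
    (hcn : ABB.CostNeutral c μ) (hsi : ABB.StrictlyIncreasing μ)
    (W : Finset P) :
    (ABB.EJR1 A c b μ W ↔ ABB.EJR A c b μ W) ∧
    (ABB.EJRx A c b μ W ↔ ABB.EJR A c b μ W) := by
  have hcard : ∀ S T : Finset P, S.card ≤ T.card → μ S ≤ μ T :=
    fun _ _ => hcn.le_of_card_le hunit hμ.1
  exact ⟨⟨fun h => h.ejr hcard, fun h => h.ejr1 hsi⟩, ⟨fun h => h.ejr hcard, fun h => h.ejrx hsi⟩⟩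

/-- In a unit-cost ABB instance, for a cost-neutral and strictly
increasing satisfaction function `μ`, both EJR-1 and EJR-x are equivalent to EJR. -/
theorem statement5 {V P : Type} [Fintype V] [DecidableEq V] [Fintype P] [DecidableEq P]
    (A : V → Finset P) (c : P → ℝ) (b : ℝ)
    (hn : 0 < Fintype.card V) (hc : ∀ p : P, 0 < c p) (hb : 0 < b)
    (hunit : ABB.UnitCost c)
    (μ : Finset P → ℝ) (hμ : ABB.IsSatFun μ)
    (hcn : ABB.CostNeutral c μ) (hsi : ABB.StrictlyIncreasing μ)
    (W : Finset P) (hW : ABB.costOf c W ≤ b) :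
    (ABB.EJR1 A c b μ W ↔ ABB.EJR A c b μ W) ∧
    (ABB.EJRx A c b μ W ↔ ABB.EJR A c b μ W) :=
  statement5_general A c b hunit μ hμ hcn hsi W
end

section
/- Let μ be a DNS satisfaction function on an ABB instance. Then every output of the Method of Equal Shares MES[μ] satisfies EJR-x with respect to μ. -/
open Finset

/-!
Suppose a `T`-cohesive group `N'` of size `k` witnesses a failure of EJR-x, and let `t` be
a cheapest project of `T` outside `W`. Then every member of `N'` derives at most
`μ T - μ {t}` from `W`. Along the run of MES, as long as every member of `N'` still holds
`c t / k`, the project `t` is affordable at rate `ρ* = c t / (k μ {t})`, so no member pays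
more than `ρ* μ {q}` for any selected `q`, and no more than `c q / k` for a project `q ∈ T`
with `c q ≤ c t`. By DNS, `ρ* μ {q} ≤ c q / k` for the remaining projects of `T`, so the
total a member can have paid is at most `c T / k - c t / k ≤ b / n - c t / k`. Hence the
members keep `c t / k` until the end, and `t` is still affordable when MES stops.
-/

namespace ABB

variable {V P : Type}

section SatFun

variable {c : P → ℝ} {μ : Finset P → ℝ}

lemma IsSatFun.singleton_pos (hμ : IsSatFun μ) (p : P) : 0 < μ {p} :=
  (hμ.2.2 _).lt_of_ne fun h => singleton_ne_empty p ((hμ.2.1 _).1 h.symm)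

lemma DNS.cost_mul_le (hdns : DNS c μ) (hc : ∀ p, 0 < c p) {p p' : P} (h : c p ≤ c p') :
    c p * μ {p'} ≤ c p' * μ {p} := by
  have := (div_le_div_iff₀ (hc p') (hc p)).1 (hdns.2 p p' h).2
  linarith

lemma DNS.rate_mul_le_of_cost_le (hdns : DNS c μ) (hμ : IsSatFun μ) (hc : ∀ p, 0 < c p)
    {k : ℝ} (hk : 0 < k) {t q : P} (h : c t ≤ c q) :
    c t / (k * μ {t}) * μ {q} ≤ c q / k := by
  have hμt := hμ.singleton_pos t
  have := mul_le_mul_of_nonneg_left (hdns.cost_mul_le hc h) hk.le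
  rw [div_mul_eq_mul_div, div_le_div_iff₀ (by positivity) hk]
  linarith

variable [DecidableEq P]

lemma Additive.insert_eq (hμ : Additive μ) {S : Finset P} {p : P} (hp : p ∉ S) :
    μ (insert p S) = μ {p} + μ S := by
  rw [hμ, sum_insert hp, ← hμ]

lemma Additive.sdiff_add (hμ : Additive μ) {S T : Finset P} (h : S ⊆ T) :
    μ (T \ S) + μ S = μ T := by
  rw [hμ, hμ S, hμ T, sum_sdiff h]

end SatFun

section Affordability

variable [Fintype V] [DecidableEq P] {A : V → Finset P} {c : P → ℝ} {μ : Finset P → ℝ}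
  {bud : V → ℝ} {p : P}

lemma exists_affordable_le {R : ℝ} (hR : 0 ≤ R) (hbud : ∀ i, 0 ≤ bud i) (hcp : 0 ≤ c p)
    (h : c p ≤ ∑ i ∈ approvers A p, min (bud i) (R * μ {p})) :
    ∃ ρ, 0 ≤ ρ ∧ ρ ≤ R ∧ Affordable A c μ bud p ρ := by
  have hcont : Continuous fun ρ : ℝ => ∑ i ∈ approvers A p, min (bud i) (ρ * μ {p}) :=
    continuous_finsetSum _ fun i _ => continuous_const.min (continuous_id.mul continuous_const)
  have hzero : ∑ i ∈ approvers A p, min (bud i) (0 * μ {p}) = 0 :=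
    sum_eq_zero fun i _ => by rw [zero_mul, min_eq_right (hbud i)]
  obtain ⟨ρ, ⟨hρ0, hρR⟩, hρ⟩ :=
    intermediate_value_Icc hR hcont.continuousOn ⟨hzero.symm ▸ hcp, h⟩
  exact ⟨ρ, hρ0, hρR, hρ⟩

lemma exists_affordable_of_forall_share_le {G : Finset V} (hG : ∀ i ∈ G, p ∈ A i)
    (hGne : G.Nonempty) (hμp : 0 < μ {p}) (hcp : 0 < c p) (hbud : ∀ i, 0 ≤ bud i)
    (hshare : ∀ i ∈ G, c p / #G ≤ bud i) :
    ∃ ρ, 0 ≤ ρ ∧ ρ ≤ c p / (#G * μ {p}) ∧ Affordable A c μ bud p ρ := by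
  have hk : (0 : ℝ) < #G := by exact_mod_cast hGne.card_pos
  have hrate : c p / (#G * μ {p}) * μ {p} = c p / #G := by field_simp
  refine exists_affordable_le (by positivity) hbud hcp.le ?_
  calc c p = ∑ _i ∈ G, c p / #G := by rw [sum_const, nsmul_eq_mul]; field_simp
    _ ≤ ∑ i ∈ G, min (bud i) (c p / (#G * μ {p}) * μ {p}) :=
        sum_le_sum fun i hi => by rw [hrate]; exact le_min (hshare i hi) le_rfl
    _ ≤ ∑ i ∈ approvers A p, min (bud i) (c p / (#G * μ {p}) * μ {p}) :=
        sum_le_sum_of_subset_of_nonneg (fun i hi => mem_filter.2 ⟨mem_univ i, hG i hi⟩)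
          fun i _ _ => le_min (hbud i) (by positivity)

lemma rate_le_of_forall_share_le {W : Finset P} {ρ : ℝ}
    (hmin : ∀ p' ∉ W, ∀ ρ' : ℝ, 0 ≤ ρ' → Affordable A c μ bud p' ρ' → ρ ≤ ρ')
    (hpW : p ∉ W) {G : Finset V} (hG : ∀ i ∈ G, p ∈ A i) (hGne : G.Nonempty)
    (hμp : 0 < μ {p}) (hcp : 0 < c p) (hbud : ∀ i, 0 ≤ bud i)
    (hshare : ∀ i ∈ G, c p / #G ≤ bud i) :
    ρ ≤ c p / (#G * μ {p}) := by
  obtain ⟨ρ', hρ'0, hρ'le, hρ'⟩ :=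
    exists_affordable_of_forall_share_le hG hGne hμp hcp hbud hshare
  exact (hmin p hpW ρ' hρ'0 hρ').trans hρ'le

end Affordability

section Run

variable [Fintype V] [DecidableEq P] {A : V → Finset P} {c : P → ℝ} {μ : Finset P → ℝ}
  {b0 : ℝ}

lemma MESReach.bud_nonneg {W : Finset P} {bud : V → ℝ} (h : MESReach A c μ b0 W bud)
    (hb0 : 0 ≤ b0) (i : V) : 0 ≤ bud i := by
  induction h with
  | init => exact hb0
  | step _ _ _ _ _ ih =>
    dsimp only
    split_ifs
    · exact sub_nonneg.2 (min_le_left _ _)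
    · exact ih

theorem MESReach.spent_le_sum {G : Finset V} {π : P → ℝ} {W : Finset P}
    (hstep : ∀ W' bud' p ρ, MESReach A c μ b0 W' bud' → insert p W' ⊆ W → p ∉ W' →
      (∀ p' ∉ W', ∀ ρ' : ℝ, 0 ≤ ρ' → Affordable A c μ bud' p' ρ' → ρ ≤ ρ') →
      (∀ i ∈ G, b0 - bud' i ≤ ∑ q ∈ A i ∩ W', π q) →
      ∀ i ∈ G, p ∈ A i → min (bud' i) (ρ * μ {p}) ≤ π p)
    {W' : Finset P} {bud' : V → ℝ} (h : MESReach A c μ b0 W' bud') (hW' : W' ⊆ W) :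
    ∀ i ∈ G, b0 - bud' i ≤ ∑ q ∈ A i ∩ W', π q := by
  induction h with
  | init => intro i _; simp
  | @step W₀ bud₀ p ρ h₀ hp _ _ hmin ih =>
    have hinv := ih ((subset_insert p W₀).trans hW')
    intro i hi
    by_cases hpi : p ∈ A i
    · have hpay := hstep W₀ bud₀ p ρ h₀ hW' hp hmin hinv i hi hpi
      rw [inter_insert_of_mem hpi, sum_insert fun h => hp (mem_inter.1 h).2]
      simp only [if_pos hpi]
      linarith [hinv i hi]
    · rw [inter_insert_of_notMem hpi]
      simp only [if_neg hpi]
      exact hinv i hi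

end Run

/-- The most a member of a group of size `k` pays for `q`, as long as every member still
holds the equal share `c t / k` of the cheapest unselected project `t` of `T`. -/
noncomputable def paymentCap [DecidableEq P] (c : P → ℝ) (μ : Finset P → ℝ) (T : Finset P)
    (t : P) (k : ℝ) (q : P) : ℝ :=
  if q ∈ T ∧ c q ≤ c t then c q / k else c t / (k * μ {t}) * μ {q}

section EJRx

variable [Fintype V] [DecidableEq P] {A : V → Finset P} {c : P → ℝ} {μ : Finset P → ℝ}
  {b0 : ℝ} {N' : Finset V} {T W : Finset P} {t : P}

lemma paymentCap_nonneg (hc : ∀ p, 0 < c p) (hμ : IsSatFun μ) {k : ℝ} (hk : 0 < k) (q : P) :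
    0 ≤ paymentCap c μ T t k q := by
  have := hc q
  have := hc t
  have := hμ.singleton_pos q
  have := hμ.singleton_pos t
  unfold paymentCap
  split_ifs <;> positivity

lemma sum_paymentCap_add_le (hμ : IsSatFun μ) (hdns : DNS c μ) (hc : ∀ p, 0 < c p)
    {k : ℝ} (hk : 0 < k) {S : Finset P} (hTS : T ⊆ S)
    (htTW : t ∈ T \ W) (htmin : ∀ q ∈ T \ W, c t ≤ c q)
    (hdef : μ (S ∩ W) + μ {t} ≤ μ T) :
    ∑ q ∈ S ∩ W, paymentCap c μ T t k q + c t / k ≤ costOf c T / k := by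
  have hμt := hμ.singleton_pos t
  set ρ := c t / (k * μ {t})
  have hρ : 0 ≤ ρ := by have := hc t; positivity
  set C := (T ∩ W).filter fun q => c q ≤ c t
  have hCT : C ⊆ T := (filter_subset _ _).trans inter_subset_left
  have hCSW : C ⊆ S ∩ W := (filter_subset _ _).trans (inter_subset_inter_right hTS)
  have hsum : ∑ q ∈ S ∩ W, paymentCap c μ T t k q = costOf c C / k + ρ * μ ((S ∩ W) \ C) := by
    rw [← sum_sdiff hCSW, add_comm, costOf, sum_div, hdns.1, mul_sum]
    congr 1 <;> refine sum_congr rfl fun q hq => ?_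
    · obtain ⟨hqTW, hq⟩ := mem_filter.1 hq
      simp only [paymentCap, if_pos (And.intro (mem_inter.1 hqTW).1 hq)]
    · obtain ⟨hqSW, hqC⟩ := mem_sdiff.1 hq
      have : ¬(q ∈ T ∧ c q ≤ c t) := fun h =>
        hqC (mem_filter.2 ⟨mem_inter.2 ⟨h.1, (mem_inter.1 hqSW).2⟩, h.2⟩)
      rw [paymentCap, if_neg this]
  have hrest : ρ * μ (T \ C) ≤ costOf c (T \ C) / k := by
    rw [hdns.1, mul_sum, costOf, sum_div]
    refine sum_le_sum fun q hq => hdns.rate_mul_le_of_cost_le hμ hc hk ?_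
    obtain ⟨hqT, hqC⟩ := mem_sdiff.1 hq
    by_cases hqW : q ∈ W
    · exact (lt_of_not_ge fun h => hqC (mem_filter.2 ⟨mem_inter.2 ⟨hqT, hqW⟩, h⟩)).le
    · exact htmin q (mem_sdiff.2 ⟨hqT, hqW⟩)
  have htC : t ∈ T \ C := mem_sdiff.2 ⟨(mem_sdiff.1 htTW).1,
    fun h => (mem_sdiff.1 htTW).2 (mem_inter.1 (mem_filter.1 h).1).2⟩
  have hρt : ρ * μ {t} = c t / k := by simp only [ρ]; field_simp
  have hsat : μ ((S ∩ W) \ C) + μ {t} ≤ μ (T \ C) := by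
    linarith [hdns.1.sdiff_add hCSW, hdns.1.sdiff_add hCT]
  have hcost : costOf c C / k + costOf c (T \ C) / k = costOf c T / k := by
    rw [← add_div, costOf, costOf, costOf, add_comm, sum_sdiff hCT]
  calc ∑ q ∈ S ∩ W, paymentCap c μ T t k q + c t / k
      = costOf c C / k + ρ * (μ ((S ∩ W) \ C) + μ {t}) := by rw [hsum, ← hρt]; ring
    _ ≤ costOf c C / k + ρ * μ (T \ C) := by gcongr
    _ ≤ costOf c T / k := by linarith

lemma rate_mul_le_paymentCap (hμ : IsSatFun μ) (hc : ∀ p, 0 < c p) {bud : V → ℝ}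
    {W' : Finset P} {ρ : ℝ} {p : P}
    (hmin : ∀ p' ∉ W', ∀ ρ' : ℝ, 0 ≤ ρ' → Affordable A c μ bud p' ρ' → ρ ≤ ρ')
    (hbud : ∀ i, 0 ≤ bud i) (hN' : N'.Nonempty) (hTA : ∀ i ∈ N', T ⊆ A i)
    (htT : t ∈ T) (htW' : t ∉ W') (hpW' : p ∉ W')
    (hshare : ∀ i ∈ N', c t / #N' ≤ bud i) :
    ρ * μ {p} ≤ paymentCap c μ T t #N' p := by
  have hk : (0 : ℝ) < #N' := by exact_mod_cast hN'.card_pos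
  have hμp := hμ.singleton_pos p
  unfold paymentCap
  split_ifs with hp
  · have hρ := rate_le_of_forall_share_le hmin hpW' (fun i hi => hTA i hi hp.1) hN' hμp
      (hc p) hbud fun i hi => (div_le_div_of_nonneg_right hp.2 hk.le).trans (hshare i hi)
    calc ρ * μ {p} ≤ c p / (#N' * μ {p}) * μ {p} := mul_le_mul_of_nonneg_right hρ hμp.le
      _ = c p / #N' := by field_simp
  · exact mul_le_mul_of_nonneg_right (rate_le_of_forall_share_le hmin htW'
      (fun i hi => hTA i hi htT) hN' (hμ.singleton_pos t) (hc t) hbud hshare) hμp.le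

theorem MESReach.share_le_bud (hμ : IsSatFun μ) (hdns : DNS c μ) (hc : ∀ p, 0 < c p)
    (hb0 : 0 ≤ b0) (hN' : N'.Nonempty) (hTA : ∀ i ∈ N', T ⊆ A i)
    (hTb : costOf c T ≤ #N' * b0) (htTW : t ∈ T \ W) (htmin : ∀ q ∈ T \ W, c t ≤ c q)
    (hdef : ∀ i ∈ N', μ (A i ∩ W) + μ {t} ≤ μ T)
    {W' : Finset P} {bud : V → ℝ} (h : MESReach A c μ b0 W' bud) (hW' : W' ⊆ W) :
    ∀ i ∈ N', c t / #N' ≤ bud i := by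
  have hk : (0 : ℝ) < #N' := by exact_mod_cast hN'.card_pos
  obtain ⟨htT, htW⟩ := mem_sdiff.1 htTW
  have hkeep : ∀ W' ⊆ W, ∀ bud : V → ℝ,
      (∀ i ∈ N', b0 - bud i ≤ ∑ q ∈ A i ∩ W', paymentCap c μ T t #N' q) →
      ∀ i ∈ N', c t / #N' ≤ bud i := by
    intro W' hW' bud hspent i hi
    have hmono : ∑ q ∈ A i ∩ W', paymentCap c μ T t #N' q
        ≤ ∑ q ∈ A i ∩ W, paymentCap c μ T t #N' q :=
      sum_le_sum_of_subset_of_nonneg (inter_subset_inter_left hW')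
        fun q _ _ => paymentCap_nonneg hc hμ hk q
    have hcap := sum_paymentCap_add_le hμ hdns hc hk (hTA i hi) htTW htmin (hdef i hi)
    have hTk : costOf c T / #N' ≤ b0 := by rw [div_le_iff₀ hk]; linarith
    linarith [hspent i hi]
  refine hkeep W' hW' bud (h.spent_le_sum ?_ hW')
  intro W₀ bud₀ p ρ h₀ hpW hp hmin hspent i _ _
  have hW₀ : W₀ ⊆ W := (subset_insert p W₀).trans hpW
  exact (min_le_right _ _).trans (rate_mul_le_paymentCap hμ hc hmin (h₀.bud_nonneg hb0) hN'
    hTA htT (fun h => htW (hW₀ h)) hp (hkeep W₀ hW₀ bud₀ hspent))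

end EJRx

end ABB

theorem statement6_general {V P : Type} [Fintype V] [DecidableEq P]
    (A : V → Finset P) (c : P → ℝ) (b : ℝ)
    (hc : ∀ p : P, 0 < c p) (hb : 0 < b)
    (μ : Finset P → ℝ) (hμ : ABB.IsSatFun μ) (hdns : ABB.DNS c μ)
    (W : Finset P) (hW : ABB.MESOutput A c b μ W) :
    ABB.EJRx A c b μ W := by
  intro N' T ⟨hN', hTA, hTb⟩
  by_contra hfail
  push Not at hfail
  obtain ⟨bud, hreach, hterm⟩ := hW
  obtain ⟨i₀, hi₀⟩ := hN'
  obtain ⟨t, htTW, htmin⟩ := (T \ W).exists_min_image c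
    (let ⟨p, hp, _⟩ := hfail i₀ hi₀; ⟨p, hp⟩)
  have hdef : ∀ i ∈ N', μ (A i ∩ W) + μ {t} ≤ μ T := by
    intro i hi
    obtain ⟨p, hp, hle⟩ := hfail i hi
    obtain ⟨hpT, hpW⟩ := mem_sdiff.1 hp
    rw [inter_insert_of_mem (hTA i hi hpT),
      hdns.1.insert_eq fun h => hpW (mem_inter.1 h).2] at hle
    linarith [(hdns.2 t p (htmin p hp)).1]
  have hb0 : 0 ≤ b / Fintype.card V := by positivity
  have hshare := hreach.share_le_bud hμ hdns hc hb0 ⟨i₀, hi₀⟩ hTA (hTb.trans_eq (by ring))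
    htTW htmin hdef subset_rfl
  obtain ⟨ρ, hρ, -, haff⟩ := ABB.exists_affordable_of_forall_share_le
    (fun i hi => hTA i hi (mem_sdiff.1 htTW).1) ⟨i₀, hi₀⟩ (hμ.singleton_pos t) (hc t)
    (hreach.bud_nonneg hb0) hshare
  exact hterm t (mem_sdiff.1 htTW).2 ρ hρ haff

/-- For a DNS satisfaction function `μ`, every output of MES[μ]
satisfies EJR-x w.r.t. `μ`. -/
theorem statement6 {V P : Type} [Fintype V] [DecidableEq V] [Fintype P] [DecidableEq P]
    (A : V → Finset P) (c : P → ℝ) (b : ℝ)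
    (hn : 0 < Fintype.card V) (hc : ∀ p : P, 0 < c p) (hb : 0 < b)
    (μ : Finset P → ℝ) (hμ : ABB.IsSatFun μ) (hdns : ABB.DNS c μ)
    (W : Finset P) (hW : ABB.MESOutput A c b μ W) :
    ABB.EJRx A c b μ W :=
  statement6_general A c b hc hb μ hμ hdns W hW
end

section
/- Let W be an outcome of an ABB instance such that there is a price system (B, d) for W with B > b. Then W satisfies PJR-x with respect to the cost-based satisfaction function μ^c. -/
open Finset

/-!
Every member of a `T`-cohesive group `N'` spends money only on funded projects she approves, so
the group as a whole spends at most `c(W ∩ ⋃_{i ∈ N'} A_i)`. For `p ∈ T ∖ W`, condition (C5)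
caps the money left over in `N'` at `c(p)`. Hence `|N'| · B / n ≤ c(p) + c(W ∩ ⋃_{i ∈ N'} A_i)`,
while cohesiveness and `b < B` give `c(T) ≤ |N'| · b / n < |N'| · B / n`.
-/

namespace ABB

variable {V P : Type} [Fintype V] [Fintype P] [DecidableEq P]
  {A : V → Finset P} {c : P → ℝ} {W : Finset P} {B : ℝ} {d : V → P → ℝ}

theorem PriceSystem.sum_payments_eq_sum_inter (hps : PriceSystem A c W B d) (i : V) :
    ∑ q, d i q = ∑ q ∈ W ∩ A i, d i q := by
  obtain ⟨-, hd, hC1, hC2, -⟩ := hps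
  refine (Finset.sum_subset (Finset.subset_univ _) fun q _ hq => ?_).symm
  by_contra hne
  have hpos : 0 < d i q := lt_of_le_of_ne (hd i q).1 (Ne.symm hne)
  exact hq (Finset.mem_inter.mpr ⟨hC2 i q hpos, hC1 i q hpos⟩)

theorem PriceSystem.sum_spent_le_costOf_inter (hps : PriceSystem A c W B d) (N' : Finset V) :
    ∑ i ∈ N', ∑ q, d i q ≤ costOf c (W ∩ N'.biUnion A) := by
  have hd : ∀ i q, 0 ≤ d i q := fun i q => (hps.2.1 i q).1
  have hC4 := hps.2.2.2.2.2.1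
  calc ∑ i ∈ N', ∑ q, d i q
      = ∑ i ∈ N', ∑ q ∈ W ∩ A i, d i q :=
        Finset.sum_congr rfl fun i _ => hps.sum_payments_eq_sum_inter i
    _ ≤ ∑ i ∈ N', ∑ q ∈ W ∩ N'.biUnion A, d i q := by
        refine Finset.sum_le_sum fun i hi => Finset.sum_le_sum_of_subset_of_nonneg ?_
          fun q _ _ => hd i q
        exact Finset.inter_subset_inter_left (Finset.subset_biUnion_of_mem A hi)
    _ = ∑ q ∈ W ∩ N'.biUnion A, ∑ i ∈ N', d i q := Finset.sum_comm
    _ ≤ ∑ q ∈ W ∩ N'.biUnion A, ∑ i, d i q :=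
        Finset.sum_le_sum fun q _ => Finset.sum_le_sum_of_subset_of_nonneg
          (Finset.subset_univ N') fun i _ _ => hd i q
    _ = costOf c (W ∩ N'.biUnion A) :=
        Finset.sum_congr rfl fun q hq => hC4 q (Finset.mem_inter.mp hq).1

theorem PriceSystem.card_mul_le_add_sum_spent (hps : PriceSystem A c W B d) {N' : Finset V}
    {p : P} (hpW : p ∉ W) (hN'p : ∀ i ∈ N', p ∈ A i) :
    N'.card * (B / Fintype.card V) ≤ c p + ∑ i ∈ N', ∑ q, d i q := by
  obtain ⟨-, -, -, -, hC3, -, hC5⟩ := hps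
  have hN'_sub : N' ⊆ approvers A p := fun i hi =>
    Finset.mem_filter.mpr ⟨Finset.mem_univ i, hN'p i hi⟩
  have hleft : ∑ i ∈ N', (B / Fintype.card V - ∑ q, d i q) ≤ c p :=
    (Finset.sum_le_sum_of_subset_of_nonneg hN'_sub fun i _ _ => sub_nonneg.mpr (hC3 i)).trans
      (hC5 p hpW)
  rw [Finset.sum_sub_distrib, Finset.sum_const, nsmul_eq_mul] at hleft
  linarith

end ABB

theorem statement11_general {V P : Type} [Fintype V] [Fintype P] [DecidableEq P]
    (A : V → Finset P) (c : P → ℝ) (b : ℝ)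
    (W : Finset P)
    (B : ℝ) (d : V → P → ℝ)
    (hps : ABB.PriceSystem A c W B d) (hBb : b < B) :
    ABB.PJRx A c b (ABB.costOf c) W := by
  rintro N' T ⟨hN', hTA, hTcost⟩ p hp
  obtain ⟨hpT, hpW⟩ := Finset.mem_sdiff.mp hp
  have hcard : (0 : ℝ) < N'.card := by exact_mod_cast hN'.card_pos
  have hn : (0 : ℝ) < Fintype.card V := by
    exact_mod_cast hN'.card_pos.trans_le N'.card_le_univ
  have hpS : p ∉ W ∩ N'.biUnion A := fun h => hpW (Finset.mem_inter.mp h).1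
  have hleftover := hps.card_mul_le_add_sum_spent hpW fun i hi => hTA i hi hpT
  have hspent := hps.sum_spent_le_costOf_inter N'
  calc ABB.costOf c T ≤ N'.card / Fintype.card V * b := hTcost
    _ < N'.card * (B / Fintype.card V) := by
        rw [div_mul_eq_mul_div, mul_div_assoc]
        gcongr
    _ ≤ c p + ABB.costOf c (W ∩ N'.biUnion A) := by linarith
    _ = ABB.costOf c (insert p (W ∩ N'.biUnion A)) := (Finset.sum_insert hpS).symm

/-- If an outcome `W` admits a price system `(B, d)` with `B > b`,
then `W` satisfies PJR-x w.r.t. the cost-based satisfaction function `μ^c`. -/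
theorem statement11 {V P : Type} [Fintype V] [DecidableEq V] [Fintype P] [DecidableEq P]
    (A : V → Finset P) (c : P → ℝ) (b : ℝ)
    (hn : 0 < Fintype.card V) (hc : ∀ p : P, 0 < c p) (hb : 0 < b)
    (W : Finset P) (hW : ABB.costOf c W ≤ b)
    (B : ℝ) (d : V → P → ℝ)
    (hps : ABB.PriceSystem A c W B d) (hBb : b < B) :
    ABB.PJRx A c b (ABB.costOf c) W :=
  statement11_general A c b W B d hps hBb
end

section
/- Every output W of the Method of Equal Shares MES[μ^#] (i.e., MES run with the cardinality-based satisfaction function) admits a price system (B, d) satisfying conditions C1–C5 and C6 with B > b. -/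
open Finset

/-!
Record, along the run of MES, how much each voter paid for each selected project. These
payments satisfy C1–C4 with `B = b`. They also satisfy C6: when `p` is bought at the minimal
price `ρ`, every unselected `q` has `∑_{i ∈ N_q} min (b_i, ρ) ≤ c q`, for otherwise, by
continuity in `ρ`, `q` would already be affordable at some smaller price. At termination no
project is affordable at all, so `∑_{i ∈ N_p} b_i < c p` strictly for each unselected `p`; the
finitely many strict slacks leave room to raise `B` to `b + ε` while keeping C5.
-/

theorem Finset.exists_pos_forall_add_le {ι α : Type*} [AddCommGroup α] [LinearOrder α]
    [IsOrderedAddMonoid α] [Nontrivial α] (s : Finset ι) {f g : ι → α}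
    (h : ∀ i ∈ s, f i < g i) : ∃ ε > 0, ∀ i ∈ s, f i + ε ≤ g i := by
  rcases s.eq_empty_or_nonempty with rfl | hs
  · simpa using exists_zero_lt
  · obtain ⟨j, hj, hmin⟩ := s.exists_min_image (fun i => g i - f i) hs
    refine ⟨g j - f j, sub_pos.2 (h j hj), fun i hi => ?_⟩
    exact le_sub_iff_add_le'.1 (hmin i hi)

theorem Finset.exists_sum_min_eq {ι : Type*} (s : Finset ι) {f : ι → ℝ}
    (hf : ∀ i ∈ s, 0 ≤ f i) {x ρ : ℝ} (hρ : 0 ≤ ρ) (hx : 0 ≤ x)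
    (hxρ : x ≤ ∑ i ∈ s, min (f i) ρ) : ∃ ρ' ∈ Set.Icc 0 ρ, ∑ i ∈ s, min (f i) ρ' = x := by
  have hcont : Continuous fun r : ℝ => ∑ i ∈ s, min (f i) r := by fun_prop
  have hzero : ∑ i ∈ s, min (f i) 0 = 0 := sum_eq_zero fun i hi => min_eq_right (hf i hi)
  exact intermediate_value_Icc hρ hcont.continuousOn ⟨by rw [hzero]; exact hx, hxρ⟩

namespace ABB

variable {V P : Type} [Fintype V] [Fintype P] [DecidableEq P]
  {A : V → Finset P} {c : P → ℝ}

omit [Fintype P] in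
theorem affordable_card_iff {bud : V → ℝ} {p : P} {ρ : ℝ} :
    Affordable A c (fun S => (S.card : ℝ)) bud p ρ ↔
      ∑ i ∈ approvers A p, min (bud i) ρ = c p := by
  simp [Affordable]

omit [Fintype P] in
theorem sum_min_le_of_not_affordable {bud : V → ℝ} (hbud : ∀ i, 0 ≤ bud i) {p : P}
    (hc : 0 ≤ c p) {ρ : ℝ} (hρ : 0 ≤ ρ)
    (h : ∀ ρ' ∈ Set.Ico 0 ρ, ¬ Affordable A c (fun S => (S.card : ℝ)) bud p ρ') :
    ∑ i ∈ approvers A p, min (bud i) ρ ≤ c p := by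
  by_contra! hlt
  obtain ⟨ρ', ⟨hρ'0, hρ'ρ⟩, hρ'⟩ :=
    (approvers A p).exists_sum_min_eq (fun i _ => hbud i) hρ hc hlt.le
  have hne : ρ' ≠ ρ := by rintro rfl; exact hlt.ne' hρ'
  exact h ρ' ⟨hρ'0, lt_of_le_of_ne hρ'ρ hne⟩ (affordable_card_iff.2 hρ')

/-- Voter `i`'s payment when `p` is bought at price `ρ` per unit of satisfaction. -/
def share (A : V → Finset P) (bud : V → ℝ) (p : P) (ρ : ℝ) (i : V) : ℝ :=
  if p ∈ A i then min (bud i) ρ else 0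

omit [Fintype V] [Fintype P] in
theorem share_nonneg {bud : V → ℝ} (hbud : ∀ i, 0 ≤ bud i) (p : P) {ρ : ℝ} (hρ : 0 ≤ ρ)
    (i : V) : 0 ≤ share A bud p ρ i := by
  unfold share; split_ifs
  exacts [le_min (hbud i) hρ, le_rfl]

omit [Fintype V] [Fintype P] in
theorem share_le_min {bud : V → ℝ} (hbud : ∀ i, 0 ≤ bud i) (p : P) {ρ : ℝ} (hρ : 0 ≤ ρ)
    (i : V) : share A bud p ρ i ≤ min (bud i) ρ := by
  unfold share; split_ifs
  exacts [le_rfl, le_min (hbud i) hρ]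

omit [Fintype P] in
theorem sum_share (bud : V → ℝ) (p : P) (ρ : ℝ) :
    ∑ i, share A bud p ρ i = ∑ i ∈ approvers A p, min (bud i) ρ := by
  rw [approvers, sum_filter]
  rfl

/-- The invariant of a run of MES[μ^#] from per-voter budget `b0` that has reached `W` with
remaining budgets `bud`; `d i p` is what voter `i` has paid for `p`. -/
structure IsMESPayment (A : V → Finset P) (c : P → ℝ) (b0 : ℝ) (W : Finset P) (bud : V → ℝ)
    (d : V → P → ℝ) : Prop where
  nonneg : ∀ i p, 0 ≤ d i p
  mem_of_pos : ∀ i p, 0 < d i p → p ∈ A i ∧ p ∈ W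
  budget_add_sum : ∀ i, bud i + ∑ p, d i p = b0
  budget_nonneg : ∀ i, 0 ≤ bud i
  sum_eq_cost : ∀ p ∈ W, ∑ i, d i p = c p
  c6 : C6 A c W d

namespace IsMESPayment

variable {b0 : ℝ} {W : Finset P} {bud : V → ℝ} {d : V → P → ℝ}

theorem init (hb0 : 0 ≤ b0) : IsMESPayment A c b0 ∅ (fun _ => b0) 0 where
  nonneg _ _ := le_rfl
  mem_of_pos _ _ h := absurd h (lt_irrefl 0)
  budget_add_sum _ := by simp
  budget_nonneg _ := hb0
  sum_eq_cost _ h := absurd h (notMem_empty _)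
  c6 _ _ _ h := absurd h (notMem_empty _)

theorem eq_zero_of_notMem (h : IsMESPayment A c b0 W bud d) {p : P} (hp : p ∉ W) (i : V) :
    d i p = 0 :=
  (h.nonneg i p).eq_or_lt.elim Eq.symm fun hpos => absurd (h.mem_of_pos i p hpos).2 hp

theorem sum_le (h : IsMESPayment A c b0 W bud d) (i : V) : ∑ p, d i p ≤ b0 := by
  linarith [h.budget_add_sum i, h.budget_nonneg i]

theorem budget_le (h : IsMESPayment A c b0 W bud d) (i : V) : bud i ≤ b0 := by
  linarith [h.budget_add_sum i, sum_nonneg fun p (_ : p ∈ univ) => h.nonneg i p]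

theorem step (h : IsMESPayment A c b0 W bud d) {p : P} (hp : p ∉ W) {ρ : ℝ} (hρ : 0 ≤ ρ)
    (hpay : ∑ i ∈ approvers A p, min (bud i) ρ = c p)
    (hle : ∀ q ∉ W, ∑ i ∈ approvers A q, min (bud i) ρ ≤ c q) :
    IsMESPayment A c b0 (insert p W) (bud - share A bud p ρ)
      (fun i => d i + Pi.single p (share A bud p ρ i)) := by
  have hd_self : ∀ i, (d i + Pi.single p (share A bud p ρ i) : P → ℝ) p = share A bud p ρ i :=
    fun i => by simp [h.eq_zero_of_notMem hp]
  have hd_ne : ∀ i q, q ≠ p → (d i + Pi.single p (share A bud p ρ i) : P → ℝ) q = d i q :=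
    fun i q hq => by simp [hq]
  refine ⟨fun i q => ?_, fun i q hpos => ?_, fun i => ?_, fun i => ?_, fun q hq => ?_, ?_⟩
  · obtain rfl | hq := eq_or_ne p q
    · exact (hd_self i).symm ▸ share_nonneg h.budget_nonneg p hρ i
    · exact (hd_ne i q hq.symm).symm ▸ h.nonneg i q
  · obtain rfl | hq := eq_or_ne p q
    · refine ⟨?_, mem_insert_self _ _⟩
      rw [hd_self] at hpos
      by_contra hA
      simp [share, hA] at hpos
    · obtain ⟨hA, hW⟩ := h.mem_of_pos i q (hd_ne i q hq.symm ▸ hpos)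
      exact ⟨hA, mem_insert_of_mem hW⟩
  · simp only [Pi.sub_apply, Pi.add_apply, sum_add_distrib, sum_pi_single', mem_univ, if_true]
    linarith [h.budget_add_sum i]
  · exact sub_nonneg.2 ((share_le_min h.budget_nonneg p hρ i).trans (min_le_left _ _))
  · obtain rfl | hq := mem_insert.1 hq
    · simp only [hd_self, sum_share, hpay]
    · simp only [hd_ne _ q (ne_of_mem_of_not_mem hq hp)]
      exact h.sum_eq_cost q hq
  · intro q hq p' hp'
    have hqW : q ∉ W := fun hqW => hq (mem_insert_of_mem hqW)
    obtain rfl | hp' := mem_insert.1 hp'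
    · simp only [hd_self]
      exact (sum_le_sum fun i _ => share_le_min h.budget_nonneg p' hρ i).trans (hle q hqW)
    · simp only [hd_ne _ p' (ne_of_mem_of_not_mem hp' hp)]
      exact h.c6 q hqW p' hp'

theorem sum_budget_lt_of_not_affordable (h : IsMESPayment A c b0 W bud d) (hb0 : 0 ≤ b0)
    {p : P} (hc : 0 ≤ c p)
    (hp : ∀ ρ, 0 ≤ ρ → ¬ Affordable A c (fun S => (S.card : ℝ)) bud p ρ) :
    ∑ i ∈ approvers A p, bud i < c p := by
  have hmin : ∀ i, min (bud i) b0 = bud i := fun i => min_eq_left (h.budget_le i)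
  have hle := sum_min_le_of_not_affordable h.budget_nonneg hc hb0 fun ρ hρ => hp ρ hρ.1
  have hne := mt affordable_card_iff.2 (hp b0 hb0)
  simp only [hmin] at hle hne
  exact lt_of_le_of_ne hle hne

theorem priceSystem (h : IsMESPayment A c b0 W bud d) {B : ℝ} (hB : 0 < B)
    (hb0B : b0 ≤ B / Fintype.card V)
    (hslack : ∀ p ∉ W,
      ∑ i ∈ approvers A p, bud i + Fintype.card V * (B / Fintype.card V - b0) ≤ c p) :
    PriceSystem A c W B d := by
  have hsum : ∀ i, ∑ p, d i p ≤ B / Fintype.card V := fun i => (h.sum_le i).trans hb0B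
  refine ⟨hB, fun i p => ⟨h.nonneg i p, ?_⟩, fun i p hp => (h.mem_of_pos i p hp).1,
    fun i p hp => (h.mem_of_pos i p hp).2, hsum, h.sum_eq_cost, fun p hp => ?_⟩
  · exact (single_le_sum (fun q _ => h.nonneg i q) (mem_univ p)).trans (hsum i)
  · have hcard : ((approvers A p).card : ℝ) ≤ Fintype.card V := by
      exact_mod_cast card_le_univ _
    have hrest : ∀ i, B / Fintype.card V - ∑ q, d i q = bud i + (B / Fintype.card V - b0) :=
      fun i => by linarith [h.budget_add_sum i]
    calc ∑ i ∈ approvers A p, (B / Fintype.card V - ∑ q, d i q)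
        = ∑ i ∈ approvers A p, bud i + (approvers A p).card * (B / Fintype.card V - b0) := by
          simp only [hrest, sum_add_distrib, sum_const, nsmul_eq_mul]
      _ ≤ ∑ i ∈ approvers A p, bud i + Fintype.card V * (B / Fintype.card V - b0) := by
          gcongr
      _ ≤ c p := hslack p hp

end IsMESPayment

theorem MESReach.exists_isMESPayment {b0 : ℝ} (hb0 : 0 ≤ b0) (hc : ∀ p, 0 ≤ c p)
    {W : Finset P} {bud : V → ℝ} (hW : MESReach A c (fun S => (S.card : ℝ)) b0 W bud) :
    ∃ d, IsMESPayment A c b0 W bud d := by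
  induction hW with
  | init => exact ⟨0, .init hb0⟩
  | @step W bud p ρ _ hp hρ haff hmin ih =>
    obtain ⟨d, hd⟩ := ih
    have hle : ∀ q ∉ W, ∑ i ∈ approvers A q, min (bud i) ρ ≤ c q := fun q hq =>
      sum_min_le_of_not_affordable hd.budget_nonneg (hc q) hρ fun ρ' hρ' haff' =>
        (hmin q hq ρ' hρ'.1 haff').not_gt hρ'.2
    have hbud : (fun i => if p ∈ A i then bud i - min (bud i) (ρ * ({p} : Finset P).card)
        else bud i) = bud - share A bud p ρ := by
      ext i; simp only [Pi.sub_apply, share]; split_ifs <;> simp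
    exact hbud ▸ ⟨_, hd.step hp hρ (affordable_card_iff.1 haff) hle⟩

end ABB

theorem statement13_general {V P : Type} [Fintype V] [Fintype P] [DecidableEq P]
    (A : V → Finset P) (c : P → ℝ) (b : ℝ)
    (hc : ∀ p : P, 0 < c p) (hb : 0 < b)
    (W : Finset P) (hW : ABB.MESOutput A c b (fun S => (S.card : ℝ)) W) :
    ∃ (B : ℝ) (d : V → P → ℝ),
      b < B ∧ ABB.PriceSystem A c W B d ∧ ABB.C6 A c W d := by
  obtain ⟨bud, hreach, hterm⟩ := hW
  have hb0 : 0 ≤ b / Fintype.card V := by positivity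
  obtain ⟨d, hd⟩ := hreach.exists_isMESPayment hb0 fun p => (hc p).le
  have hlt : ∀ p ∈ univ.filter (· ∉ W), ∑ i ∈ ABB.approvers A p, bud i < c p := fun p hp =>
    hd.sum_budget_lt_of_not_affordable hb0 (hc p).le (hterm p (mem_filter.1 hp).2)
  obtain ⟨ε, hε, hslack⟩ := exists_pos_forall_add_le _ hlt
  have hB : b / Fintype.card V ≤ (b + ε) / Fintype.card V := by gcongr; linarith
  have hεn : (Fintype.card V : ℝ) * ((b + ε) / Fintype.card V - b / Fintype.card V) ≤ ε := by
    rw [← sub_div, add_sub_cancel_left, mul_div_assoc']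
    exact div_le_of_le_mul₀ (Nat.cast_nonneg _) hε.le (mul_comm _ _).le
  refine ⟨b + ε, d, by linarith, hd.priceSystem (by linarith) hB fun p hp => ?_, hd.c6⟩
  linarith [hslack p (mem_filter.2 ⟨mem_univ p, hp⟩)]

/-- Every output of MES[μ^#] (MES with the cardinality-based
satisfaction function) admits a price system `(B, d)` with `B > b` satisfying C1–C5
and C6. -/
theorem statement13 {V P : Type} [Fintype V] [DecidableEq V] [Fintype P] [DecidableEq P]
    (A : V → Finset P) (c : P → ℝ) (b : ℝ)
    (hn : 0 < Fintype.card V) (hc : ∀ p : P, 0 < c p) (hb : 0 < b)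
    (W : Finset P) (hW : ABB.MESOutput A c b (fun S => (S.card : ℝ)) W) :
    ∃ (B : ℝ) (d : V → P → ℝ),
      b < B ∧ ABB.PriceSystem A c W B d ∧ ABB.C6 A c W d :=
  statement13_general A c b hc hb W hW
end

section
/- Every output of the Method of Equal Shares MES[μ^#] (i.e., MES run with the cardinality-based satisfaction function) satisfies PJR-x with respect to every DNS satisfaction function μ. -/
open Finset

/-!
Suppose, for a contradiction, that `N'` is `T`-cohesive, `p ∈ T \ W`, and
`μ(W ∩ ⋃ A ∪ {p}) ≤ μ(T)`. Let `t₀` be a cheapest project of `T \ W`. Along the run of MES[μ^#],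
as long as the group can still afford `t₀`, it pays at most `min (c q) (c t₀)` for each selected
project `q` that one of its members approves: the price `ρ` of `q` is at most that of `t₀`, and the
group pays at most `ρ` per member. Comparing each project with the element of `(T \ W) \ {p}` of
least cost per satisfaction, the DNS property converts the satisfaction deficit into the cost bound
`∑_{q ∈ (W ∩ ⋃ A) \ T} min (c q) (c t₀) ≤ c((T \ W) \ {p})`, so the group never spends more than
`c(T) - c(t₀) ≤ |N'| b / n - c(t₀)`, and `t₀` remains affordable when MES stops.
-/

namespace ABB

variable {V P : Type}

theorem IsSatFun.singleton_pos_s14 {μ : Finset P → ℝ} (h : IsSatFun μ) (q : P) : 0 < μ {q} :=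
  (h.2.2 {q}).lt_of_ne fun h0 => singleton_ne_empty q ((h.2.1 {q}).1 h0.symm)

theorem DNS.min_cost_mul_le {c : P → ℝ} {μ : Finset P → ℝ} (h : DNS c μ) (hc : ∀ p, 0 < c p)
    (hμ : ∀ p, 0 < μ {p}) {m : ℝ} {q t : P} (hmt : m ≤ c t) :
    min (c q) m * μ {t} ≤ c t * μ {q} := by
  rcases le_total (c q) (c t) with hqt | htq
  · have hratio := (div_le_div_iff₀ (hc t) (hc q)).1 (h.2 q t hqt).2
    nlinarith [min_le_left (c q) m, hμ t]
  · exact mul_le_mul ((min_le_right _ _).trans hmt) (h.2 t q htq).1 (hμ t).le (hc t).le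

theorem DNS.sum_min_cost_le_sum_cost {c : P → ℝ} {μ : Finset P → ℝ} (h : DNS c μ)
    (hc : ∀ p, 0 < c p) (hμ : ∀ p, 0 < μ {p}) {m : ℝ} {X Y : Finset P}
    (hm : ∀ t ∈ Y, m ≤ c t) (hXY : ∑ q ∈ X, μ {q} ≤ ∑ t ∈ Y, μ {t}) :
    ∑ q ∈ X, min (c q) m ≤ ∑ t ∈ Y, c t := by
  rcases X.eq_empty_or_nonempty with rfl | hX
  · simpa using sum_nonneg fun t _ => (hc t).le
  have hY : Y.Nonempty := by
    by_contra! hY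
    subst hY
    exact (sum_pos (fun q _ => hμ q) hX).not_ge (by simpa using hXY)
  obtain ⟨t₀, ht₀, ht₀_min⟩ := Y.exists_min_image (fun t => c t / μ {t}) hY
  calc ∑ q ∈ X, min (c q) m
      ≤ ∑ q ∈ X, c t₀ / μ {t₀} * μ {q} := sum_le_sum fun q _ => by
        rw [div_mul_eq_mul_div, le_div_iff₀ (hμ t₀)]
        exact h.min_cost_mul_le hc hμ (hm t₀ ht₀)
    _ ≤ ∑ t ∈ Y, c t₀ / μ {t₀} * μ {t} := by
        rw [← mul_sum, ← mul_sum]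
        exact mul_le_mul_of_nonneg_left hXY (div_nonneg (hc t₀).le (hμ t₀).le)
    _ ≤ ∑ t ∈ Y, c t / μ {t} * μ {t} :=
        sum_le_sum fun t ht => mul_le_mul_of_nonneg_right (ht₀_min t ht) (hμ t).le
    _ = ∑ t ∈ Y, c t := sum_congr rfl fun t _ => div_mul_cancel₀ _ (hμ t).ne'

section MES

variable [DecidableEq P] {A : V → Finset P} {c : P → ℝ} {μ : Finset P → ℝ}

theorem sum_ite_sub_min (G : Finset V) (bud : V → ℝ) (p : P) (x : ℝ) :
    ∑ i ∈ G, (if p ∈ A i then bud i - min (bud i) x else bud i) =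
      ∑ i ∈ G, bud i - ∑ i ∈ G with p ∈ A i, min (bud i) x := by
  rw [sum_filter, ← sum_sub_distrib]
  exact sum_congr rfl fun i _ => by split_ifs <;> ring

variable [Fintype V]

theorem subset_approvers {G : Finset V} {p : P} (h : ∀ i ∈ G, p ∈ A i) : G ⊆ approvers A p :=
  fun i hi => mem_filter.2 ⟨mem_univ i, h i hi⟩


theorem MESReach.budget_nonneg {b₀ : ℝ} (hb₀ : 0 ≤ b₀) {W : Finset P} {bud : V → ℝ}
    (h : MESReach A c μ b₀ W bud) (i : V) : 0 ≤ bud i := by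
  induction h with
  | init => exact hb₀
  | step _ _ _ _ _ ih =>
    dsimp only
    split
    · exact sub_nonneg.mpr (min_le_left _ _)
    · exact ih

theorem exists_affordable_of_le_sum_budget {bud : V → ℝ} {p : P} (hbud : ∀ i, 0 ≤ bud i)
    (hμ : 0 < μ {p}) (hcp : 0 ≤ c p) (h : c p ≤ ∑ i ∈ approvers A p, bud i) :
    ∃ ρ, 0 ≤ ρ ∧ Affordable A c μ bud p ρ := by
  set M := ∑ i ∈ approvers A p, bud i
  have hcont : Continuous fun ρ : ℝ => ∑ i ∈ approvers A p, min (bud i) (ρ * μ {p}) := by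
    fun_prop
  have h0 : ∑ i ∈ approvers A p, min (bud i) (0 * μ {p}) = 0 :=
    sum_eq_zero fun i _ => by rw [zero_mul, min_eq_right (hbud i)]
  have hM : ∑ i ∈ approvers A p, min (bud i) (M / μ {p} * μ {p}) = M := by
    rw [div_mul_cancel₀ _ hμ.ne']
    exact sum_congr rfl fun i hi => min_eq_left (single_le_sum (fun j _ => hbud j) hi)
  obtain ⟨ρ, hρ, hρp⟩ := intermediate_value_Icc (div_nonneg (hcp.trans h) hμ.le)
    hcont.continuousOn (by rw [Set.mem_Icc, h0, hM]; exact ⟨hcp, h⟩)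
  exact ⟨ρ, hρ.1, hρp⟩

theorem Affordable.sum_min_le {bud : V → ℝ} {p : P} {ρ : ℝ} (h : Affordable A c μ bud p ρ)
    (hbud : ∀ i, 0 ≤ bud i) (hρ : 0 ≤ ρ * μ {p}) {G : Finset V} (hG : ∀ i ∈ G, p ∈ A i) :
    ∑ i ∈ G, min (bud i) (ρ * μ {p}) ≤ c p :=
  h ▸ sum_le_sum_of_subset_of_nonneg (subset_approvers hG)
    fun i _ _ => le_min (hbud i) hρ

theorem MESReach.card_mul_le_sum_budget_add_sum_min (hc : ∀ p, 0 ≤ c p) {b₀ : ℝ} (hb₀ : 0 ≤ b₀)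
    {G : Finset V} {q₀ : P} {W : Finset P} (hq₀ : q₀ ∉ W) (hGq₀ : ∀ i ∈ G, q₀ ∈ A i)
    (hbudget : c q₀ + ∑ q ∈ W ∩ G.biUnion A, min (c q) (c q₀) ≤ G.card * b₀)
    {U : Finset P} {bud : V → ℝ} (h : MESReach A c (fun S => (S.card : ℝ)) b₀ U bud)
    (hUW : U ⊆ W) :
    G.card * b₀ ≤ ∑ i ∈ G, bud i + ∑ q ∈ U ∩ G.biUnion A, min (c q) (c q₀) := by
  induction h with
  | init => simp
  | @step U bud p ρ hreach hpU hρ hp hρ_min ih =>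
    have hUW' : U ⊆ W := (subset_insert p U).trans hUW
    have hbud := hreach.budget_nonneg hb₀
    have hmin_nonneg : ∀ q, 0 ≤ min (c q) (c q₀) := fun q => le_min (hc q) (hc q₀)
    have hGbud : c q₀ ≤ ∑ i ∈ G, bud i := by
      have : ∑ q ∈ U ∩ G.biUnion A, min (c q) (c q₀) ≤ ∑ q ∈ W ∩ G.biUnion A, min (c q) (c q₀) :=
        sum_le_sum_of_subset_of_nonneg (inter_subset_inter hUW' subset_rfl)
          fun q _ _ => hmin_nonneg q
      linarith [ih hUW']
    have hq₀bud : c q₀ ≤ ∑ i ∈ approvers A q₀, bud i :=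
      hGbud.trans (sum_le_sum_of_subset_of_nonneg (subset_approvers hGq₀) fun i _ _ => hbud i)
    obtain ⟨ρ₀, hρ₀, hq₀aff⟩ :=
      exists_affordable_of_le_sum_budget (μ := fun S => (S.card : ℝ)) hbud (by simp) (hc q₀) hq₀bud
    have hρρ₀ : ρ ≤ ρ₀ := hρ_min q₀ (fun h => hq₀ (hUW' h)) ρ₀ hρ₀ hq₀aff
    simp only [card_singleton, Nat.cast_one, mul_one]
    rw [sum_ite_sub_min]
    set F := G.filter fun i => p ∈ A i
    have hpay_p : ∑ i ∈ F, min (bud i) ρ ≤ c p := by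
      simpa using hp.sum_min_le hbud (by simpa using hρ) fun i hi => (mem_filter.1 hi).2
    have hpay_q₀ : ∑ i ∈ F, min (bud i) ρ ≤ c q₀ := by
      refine (sum_le_sum fun i _ => min_le_min_left _ hρρ₀).trans ?_
      simpa using hq₀aff.sum_min_le hbud (by simpa using hρ₀)
        fun i hi => hGq₀ i (mem_filter.1 hi).1
    by_cases hpB : p ∈ G.biUnion A
    · rw [insert_inter_of_mem hpB, sum_insert fun h => hpU (mem_inter.1 h).1]
      linarith [ih hUW', le_min hpay_p hpay_q₀]
    · have hF : F = ∅ := filter_eq_empty_iff.2 fun i hi hpi => hpB (mem_biUnion.2 ⟨i, hi, hpi⟩)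
      rw [insert_inter_of_notMem hpB, hF, sum_empty]
      linarith [ih hUW']

theorem MESOutput.card_mul_lt_add_sum_min (hc : ∀ p, 0 ≤ c p) {b : ℝ} (hb : 0 ≤ b)
    {W : Finset P} (hW : MESOutput A c b (fun S => (S.card : ℝ)) W) {G : Finset V} {q₀ : P}
    (hq₀ : q₀ ∉ W) (hGq₀ : ∀ i ∈ G, q₀ ∈ A i) :
    G.card * (b / Fintype.card V) < c q₀ + ∑ q ∈ W ∩ G.biUnion A, min (c q) (c q₀) := by
  obtain ⟨bud, hreach, hstop⟩ := hW
  by_contra! hbudget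
  have hb₀ : 0 ≤ b / Fintype.card V := by positivity
  have hbud := hreach.budget_nonneg hb₀
  have hinv := hreach.card_mul_le_sum_budget_add_sum_min hc hb₀ hq₀ hGq₀ hbudget subset_rfl
  have hq₀bud : c q₀ ≤ ∑ i ∈ approvers A q₀, bud i :=
    (show c q₀ ≤ ∑ i ∈ G, bud i by linarith).trans
      (sum_le_sum_of_subset_of_nonneg (subset_approvers hGq₀) fun i _ _ => hbud i)
  obtain ⟨ρ, hρ, haff⟩ :=
    exists_affordable_of_le_sum_budget (μ := fun S => (S.card : ℝ)) hbud (by simp) (hc q₀) hq₀bud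
  exact hstop q₀ hq₀ ρ hρ haff

end MES

end ABB

theorem statement14_general {V P : Type} [Fintype V] [DecidableEq P]
    (A : V → Finset P) (c : P → ℝ) (b : ℝ)
    (hc : ∀ p : P, 0 < c p) (hb : 0 < b)
    (W : Finset P) (hW : ABB.MESOutput A c b (fun S => (S.card : ℝ)) W) :
    ∀ μ : Finset P → ℝ, ABB.IsSatFun μ → ABB.DNS c μ → ABB.PJRx A c b μ W := by
  intro μ hsat hdns N' T ⟨⟨i₀, hi₀⟩, hTA, hTcost⟩ p hp
  by_contra! hviol
  set S := W ∩ N'.biUnion A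
  have hST : S ∩ T = T ∩ W := by
    ext q
    simp only [S, mem_inter, mem_biUnion]
    exact ⟨fun h => ⟨h.2, h.1.1⟩, fun h => ⟨⟨h.2, i₀, hi₀, hTA i₀ hi₀ h.1⟩, h.1⟩⟩
  have hμ_le : ∑ q ∈ S \ T, μ {q} ≤ ∑ t ∈ (T \ W).erase p, μ {t} := by
    have hpS : p ∉ S := fun h => (mem_sdiff.1 hp).2 (mem_inter.1 h).1
    have := hdns.1 (insert p S) ▸ hdns.1 T ▸ hviol
    rw [sum_insert hpS, ← sum_inter_add_sum_sdiff S T, hST, ← sum_inter_add_sum_sdiff T W,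
      ← add_sum_erase _ _ hp] at this
    linarith
  obtain ⟨t₀, ht₀, ht₀_min⟩ := (T \ W).exists_min_image c ⟨p, hp⟩
  have hcost := hdns.sum_min_cost_le_sum_cost hc hsat.singleton_pos_s14
    (fun t ht => ht₀_min t (mem_of_mem_erase ht)) hμ_le
  have hMES := hW.card_mul_lt_add_sum_min (fun q => (hc q).le) hb.le (mem_sdiff.1 ht₀).2
    fun i hi => hTA i hi (mem_sdiff.1 ht₀).1
  have hST_cost : ∑ q ∈ S ∩ T, min (c q) (c t₀) ≤ ∑ q ∈ T ∩ W, c q :=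
    hST ▸ sum_le_sum fun q _ => min_le_left _ _
  rw [← sum_inter_add_sum_sdiff S T] at hMES
  rw [ABB.costOf, ← sum_inter_add_sum_sdiff T W, ← add_sum_erase _ _ hp] at hTcost
  linarith [ht₀_min p hp,
    show (N'.card : ℝ) / Fintype.card V * b = N'.card * (b / Fintype.card V) by ring]

/-- Every output of MES[μ^#] (MES with the cardinality-based
satisfaction function) satisfies PJR-x w.r.t. every DNS satisfaction function `μ`. -/
theorem statement14 {V P : Type} [Fintype V] [DecidableEq V] [Fintype P] [DecidableEq P]
    (A : V → Finset P) (c : P → ℝ) (b : ℝ)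
    (hn : 0 < Fintype.card V) (hc : ∀ p : P, 0 < c p) (hb : 0 < b)
    (W : Finset P) (hW : ABB.MESOutput A c b (fun S => (S.card : ℝ)) W) :
    ∀ μ : Finset P → ℝ, ABB.IsSatFun μ → ABB.DNS c μ → ABB.PJRx A c b μ W :=
  statement14_general A c b hc hb W hW
end
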